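/- arXiv:2409.11954 — 8 statements merged into one kernel-verified Lean document; each statement's English description precedes it below -/
import Mathlib

section
/- For all t ≥ 0, f'(t)² = 1 − f(t)^(−α). (First integral of the Sha–Yang ODE, obtained by integrating 2·f'·f'' = α·f^(−α−1)·f'.) -/
/-!
Multiplying the ODE by `2 f'` shows that the energy `f'² + f^(-α)` has derivative
`2 f' (f'' - (α/2) f^(-α-1)) = 0` wherever `f > 0`, so on `[0, ∞)` it keeps its initial value `1`.
-/

open Set

noncomputable def shaYangEnergy (α : ℝ) (f : ℝ → ℝ) (s : ℝ) : ℝ :=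
  deriv f s ^ 2 + f s ^ (-α)

theorem hasDerivAt_shaYangEnergy {α x : ℝ} {f : ℝ → ℝ} (hf : DifferentiableAt ℝ f x)
    (hf' : DifferentiableAt ℝ (deriv f) x) (hfx : f x ≠ 0) :
    HasDerivAt (shaYangEnergy α f)
      (2 * deriv f x * (deriv (deriv f) x - α / 2 * f x ^ (-α - 1))) x := by
  have hsq := hf'.hasDerivAt.pow 2
  have hrpow := hf.hasDerivAt.rpow_const (p := -α) (Or.inl hfx)
  refine (hsq.add hrpow).congr_deriv ?_
  push_cast
  ring

theorem eq_of_hasDerivAt_zero_on_Ici {g : ℝ → ℝ} {a : ℝ} (hg : ∀ x ≥ a, HasDerivAt g 0 x)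
    {t : ℝ} (ht : a ≤ t) : g t = g a :=
  constant_of_has_deriv_right_zero
    (fun x hx => (hg x hx.1).continuousAt.continuousWithinAt)
    (fun x hx => (hg x hx.1).hasDerivWithinAt) t (right_mem_Icc.mpr ht)

theorem shaYang_first_integral_general (α : ℝ) (f : ℝ → ℝ)
    (hf : ContDiff ℝ 2 f) (hf0 : f 0 = 1) (hf'0 : deriv f 0 = 0)
    (hfpos : ∀ t ≥ (0 : ℝ), 0 < f t)
    (hode : ∀ t ≥ (0 : ℝ), deriv (deriv f) t = (α / 2) * (f t) ^ (-α - 1)) :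
    ∀ t ≥ (0 : ℝ), (deriv f t) ^ 2 = 1 - (f t) ^ (-α) := by
  intro t ht
  have hconserved : ∀ x ≥ (0 : ℝ), HasDerivAt (shaYangEnergy α f) 0 x := fun x hx => by
    simpa [hode x hx] using hasDerivAt_shaYangEnergy (α := α)
      (hf.differentiable two_ne_zero x) (hf.differentiable_deriv_two x) (hfpos x hx).ne'
  have hinit : shaYangEnergy α f 0 = 1 := by simp [shaYangEnergy, hf0, hf'0]
  have henergy := eq_of_hasDerivAt_zero_on_Ici hconserved ht
  rw [hinit, shaYangEnergy] at henergy
  linarith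

/-- First integral of the Sha–Yang ODE: for all `t ≥ 0`,
`f'(t)² = 1 − f(t)^(−α)`. -/
theorem shaYang_first_integral (α : ℝ) (hα : 0 < α) (f : ℝ → ℝ)
    (hf : ContDiff ℝ 2 f) (hf0 : f 0 = 1) (hf'0 : deriv f 0 = 0)
    (hfpos : ∀ t ≥ (0 : ℝ), 0 < f t)
    (hode : ∀ t ≥ (0 : ℝ), deriv (deriv f) t = (α / 2) * (f t) ^ (-α - 1)) :
    ∀ t ≥ (0 : ℝ), (deriv f t) ^ 2 = 1 - (f t) ^ (-α) :=
  shaYang_first_integral_general α f hf hf0 hf'0 hfpos hode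
end

section
/- For all t ≥ 0 one has f(t) ≥ 1 and 0 ≤ f'(t) < 1; moreover f is strictly increasing on [0,∞), so f(t) > 1 and f'(t) > 0 for all t > 0. -/
/-!
Since `f'' = (α/2) f^(-α-1) > 0`, `f'` is strictly increasing from `f'(0) = 0`, so `f' > 0` on
`(0,∞)` and `f` is strictly increasing from `f(0) = 1`. Multiplying the equation by `2f'` shows
that the energy `f'^2 + f^(-α)` is conserved, hence equal to `1`; as `f^(-α) > 0` this gives
`f'^2 < 1`.
-/

open Set

theorem strictMonoOn_Ici_of_deriv_pos {g : ℝ → ℝ} {a : ℝ} (hg : Continuous g)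
    (hpos : ∀ x > a, 0 < deriv g x) : StrictMonoOn g (Ici a) :=
  strictMonoOn_of_deriv_pos (convex_Ici a) hg.continuousOn fun x hx =>
    hpos x (by rwa [interior_Ici] at hx)

section Energy

variable {α : ℝ} {f : ℝ → ℝ}

theorem hasDerivAt_deriv_sq_add_rpow {x : ℝ} (hf : DifferentiableAt ℝ f x)
    (hf' : DifferentiableAt ℝ (deriv f) x) (hx : 0 < f x)
    (hode : deriv (deriv f) x = (α / 2) * f x ^ (-α - 1)) :
    HasDerivAt (fun s => deriv f s ^ 2 + f s ^ (-α)) 0 x := by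
  have hsq := hf'.hasDerivAt.fun_pow 2
  have hrpow := hf.hasDerivAt.rpow_const (p := -α) (Or.inl hx.ne')
  refine (hsq.add hrpow).congr_deriv ?_
  rw [hode]
  push_cast
  ring

theorem deriv_sq_add_rpow_eq_of_ode (hf : ContDiff ℝ 2 f) (hfpos : ∀ t ≥ (0 : ℝ), 0 < f t)
    (hode : ∀ t ≥ (0 : ℝ), deriv (deriv f) t = (α / 2) * f t ^ (-α - 1))
    {t : ℝ} (ht : 0 ≤ t) :
    deriv f t ^ 2 + f t ^ (-α) = deriv f 0 ^ 2 + f 0 ^ (-α) := by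
  have hderiv : ∀ x ∈ Icc 0 t, HasDerivAt (fun s => deriv f s ^ 2 + f s ^ (-α)) 0 x :=
    fun x hx => hasDerivAt_deriv_sq_add_rpow (hf.differentiable two_ne_zero x)
      (hf.differentiable_deriv_two x) (hfpos x hx.1) (hode x hx.1)
  exact constant_of_has_deriv_right_zero
    (fun x hx => (hderiv x hx).continuousAt.continuousWithinAt)
    (fun x hx => (hderiv x (Ico_subset_Icc_self hx)).hasDerivWithinAt) t ⟨ht, le_rfl⟩

end Energy

/-- For all `t ≥ 0` one has `f(t) ≥ 1` and `0 ≤ f'(t) < 1`; moreover `f` is strictly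
increasing on `[0,∞)`, so `f(t) > 1` and `f'(t) > 0` for all `t > 0`. -/
theorem shaYang_monotonicity (α : ℝ) (hα : 0 < α) (f : ℝ → ℝ)
    (hf : ContDiff ℝ 2 f) (hf0 : f 0 = 1) (hf'0 : deriv f 0 = 0)
    (hfpos : ∀ t ≥ (0 : ℝ), 0 < f t)
    (hode : ∀ t ≥ (0 : ℝ), deriv (deriv f) t = (α / 2) * (f t) ^ (-α - 1)) :
    (∀ t ≥ (0 : ℝ), 1 ≤ f t ∧ 0 ≤ deriv f t ∧ deriv f t < 1) ∧
      StrictMonoOn f (Set.Ici (0 : ℝ)) ∧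
      ∀ t > (0 : ℝ), 1 < f t ∧ 0 < deriv f t := by
  have hf'mono : StrictMonoOn (deriv f) (Ici 0) :=
    strictMonoOn_Ici_of_deriv_pos hf.differentiable_deriv_two.continuous fun x hx => by
      have := hfpos x hx.le
      rw [hode x hx.le]
      positivity
  have hf'pos : ∀ t > (0 : ℝ), 0 < deriv f t := fun t ht =>
    hf'0 ▸ hf'mono self_mem_Ici ht.le ht
  have hfmono : StrictMonoOn f (Ici 0) :=
    strictMonoOn_Ici_of_deriv_pos hf.continuous hf'pos
  have hf1 : ∀ t > (0 : ℝ), 1 < f t := fun t ht => hf0 ▸ hfmono self_mem_Ici ht.le ht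
  refine ⟨fun t ht => ?_, hfmono, fun t ht => ⟨hf1 t ht, hf'pos t ht⟩⟩
  obtain rfl | ht := ht.eq_or_lt
  · simp [hf0, hf'0]
  have henergy : deriv f t ^ 2 + f t ^ (-α) = 1 := by
    simpa [hf0, hf'0] using deriv_sq_add_rpow_eq_of_ode hf hfpos hode ht.le
  have hrpow : 0 < f t ^ (-α) := Real.rpow_pos_of_pos (hfpos t ht.le) _
  exact ⟨(hf1 t ht).le, (hf'pos t ht).le, by nlinarith [hf'pos t ht]⟩
end

section
/- f(t) → ∞ as t → ∞. (Since f'' > 0 forces f' to increase, boundedness of f would make f'' bounded below by a positive constant, contradicting f' < 1.) -/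
/-!
Since `f'' > 0` on `[0, ∞)`, the derivative `f'` is strictly increasing there; as `f'(0) = 0`,
it is bounded below by `c = f'(1) > 0` on `[1, ∞)`, so `f` grows at least linearly with slope `c`.
-/

open Filter Set

theorem tendsto_atTop_of_pos_le_deriv {f : ℝ → ℝ} {a c : ℝ} (hc : 0 < c)
    (hf : ContinuousOn f (Ici a)) (hf' : DifferentiableOn ℝ f (Ioi a))
    (hc_le : ∀ x > a, c ≤ deriv f x) : Tendsto f atTop atTop := by
  have hlinear : ∀ x ≥ a, c * (x - a) + f a ≤ f x := fun x hx => by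
    have := (convex_Ici a).mul_sub_le_image_sub_of_le_deriv hf (by rwa [interior_Ici])
      (by rw [interior_Ici]; exact hc_le) a self_mem_Ici x hx hx
    linarith
  refine tendsto_atTop_mono' _ (eventually_ge_atTop a |>.mono hlinear) ?_
  exact tendsto_atTop_add_const_right _ _
    ((tendsto_atTop_add_const_right _ _ tendsto_id).const_mul_atTop hc)

theorem tendsto_atTop_of_deriv_nonneg_of_deriv_deriv_pos {f : ℝ → ℝ} {a : ℝ}
    (hf : ContDiff ℝ 1 f) (ha : 0 ≤ deriv f a) (hf'' : ∀ x > a, 0 < deriv (deriv f) x) :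
    Tendsto f atTop atTop := by
  have hmono : StrictMonoOn (deriv f) (Ici a) :=
    strictMonoOn_of_deriv_pos (convex_Ici a) (hf.continuous_deriv le_rfl).continuousOn
      (by rw [interior_Ici]; exact hf'')
  have hpos : 0 < deriv f (a + 1) :=
    ha.trans_lt (hmono self_mem_Ici (by simp) (lt_add_one a))
  refine tendsto_atTop_of_pos_le_deriv (a := a + 1) hpos hf.continuous.continuousOn
    (hf.differentiable one_ne_zero).differentiableOn fun x hx => ?_
  exact hmono.monotoneOn (by simp) (mem_Ici.2 (by linarith)) hx.le

theorem shaYang_f_tendsto_atTop_general (α : ℝ) (hα : 0 < α) (f : ℝ → ℝ)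
    (hf : ContDiff ℝ 2 f) (hf'0 : deriv f 0 = 0)
    (hfpos : ∀ t ≥ (0 : ℝ), 0 < f t)
    (hode : ∀ t ≥ (0 : ℝ), deriv (deriv f) t = (α / 2) * (f t) ^ (-α - 1)) :
    Filter.Tendsto f Filter.atTop Filter.atTop := by
  refine tendsto_atTop_of_deriv_nonneg_of_deriv_deriv_pos (hf.of_le (by norm_num))
    hf'0.ge fun t ht => ?_
  have := hfpos t ht.le
  rw [hode t ht.le]
  positivity

/-- `f(t) → ∞` as `t → ∞`. -/
theorem shaYang_f_tendsto_atTop (α : ℝ) (hα : 0 < α) (f : ℝ → ℝ)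
    (hf : ContDiff ℝ 2 f) (hf0 : f 0 = 1) (hf'0 : deriv f 0 = 0)
    (hfpos : ∀ t ≥ (0 : ℝ), 0 < f t)
    (hode : ∀ t ≥ (0 : ℝ), deriv (deriv f) t = (α / 2) * (f t) ^ (-α - 1)) :
    Filter.Tendsto f Filter.atTop Filter.atTop :=
  shaYang_f_tendsto_atTop_general α hα f hf hf'0 hfpos hode
end

section
/- f'(t) → 1 as t → ∞. -/
/-!
Multiplying the equation by `2 f'` shows that the energy `f'² + f^(-α)` is conserved, hence equal
to its initial value `1`. Since `f'' > 0`, `f'` increases from `f'(0) = 0`, so `f' ≥ 0` and `f`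
grows at least linearly; thus `f^(-α) → 0` and `f' = √(1 - f^(-α)) → 1`.
-/

open Filter Set Topology

theorem tendsto_atTop_of_le_deriv {f : ℝ → ℝ} {a c : ℝ} (hc : 0 < c)
    (hf : Differentiable ℝ f) (hderiv : ∀ x ≥ a, c ≤ deriv f x) :
    Tendsto f atTop atTop := by
  have hlin : Tendsto (fun t => c * (t - a) + f a) atTop atTop :=
    tendsto_atTop_add_const_right _ _
      ((tendsto_atTop_add_const_right atTop (-a) tendsto_id).const_mul_atTop hc)
  refine tendsto_atTop_mono' atTop ?_ hlin
  filter_upwards [eventually_ge_atTop a] with t ht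
  have := (convex_Ici a).mul_sub_le_image_sub_of_le_deriv hf.continuous.continuousOn
    hf.differentiableOn (fun x hx => hderiv x (interior_subset hx)) a self_mem_Ici t ht ht
  linarith

section ShaYang

variable {α : ℝ} {f : ℝ → ℝ}

theorem hasDerivAt_sq_deriv_add_rpow_neg_eq_zero (hf : ContDiff ℝ 2 f) {t : ℝ} (ht : 0 < f t)
    (hode : deriv (deriv f) t = (α / 2) * (f t) ^ (-α - 1)) :
    HasDerivAt (fun s => deriv f s ^ 2 + f s ^ (-α)) 0 t := by
  have hsq := (hf.differentiable_deriv_two t).hasDerivAt.pow 2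
  have hpow := (hf.differentiable two_ne_zero t).hasDerivAt.rpow_const (p := -α) (Or.inl ht.ne')
  exact (hsq.add hpow).congr_deriv (by rw [hode]; ring)

theorem sq_deriv_add_rpow_neg_eq_one (hf : ContDiff ℝ 2 f) (hf0 : f 0 = 1)
    (hf'0 : deriv f 0 = 0) (hfpos : ∀ t ≥ (0 : ℝ), 0 < f t)
    (hode : ∀ t ≥ (0 : ℝ), deriv (deriv f) t = (α / 2) * (f t) ^ (-α - 1)) {t : ℝ}
    (ht : 0 ≤ t) : deriv f t ^ 2 + f t ^ (-α) = 1 := by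
  have hE (x : ℝ) (hx : 0 ≤ x) :=
    hasDerivAt_sq_deriv_add_rpow_neg_eq_zero hf (hfpos x hx) (hode x hx)
  have hconst := constant_of_has_deriv_right_zero (a := 0) (b := t)
    (fun x hx => (hE x hx.1).continuousAt.continuousWithinAt)
    (fun x hx => (hE x hx.1).hasDerivWithinAt) t (right_mem_Icc.mpr ht)
  simpa [hf0, hf'0] using hconst

theorem strictMonoOn_Ici_deriv (hα : 0 < α) (hf : ContDiff ℝ 2 f)
    (hfpos : ∀ t ≥ (0 : ℝ), 0 < f t)
    (hode : ∀ t ≥ (0 : ℝ), deriv (deriv f) t = (α / 2) * (f t) ^ (-α - 1)) :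
    StrictMonoOn (deriv f) (Ici 0) := by
  refine strictMonoOn_of_deriv_pos (convex_Ici 0)
    hf.differentiable_deriv_two.continuous.continuousOn fun x hx => ?_
  rw [interior_Ici] at hx
  have := hfpos x hx.le
  rw [hode x hx.le]
  positivity

end ShaYang

/-- `f'(t) → 1` as `t → ∞`. -/
theorem shaYang_deriv_tendsto_one (α : ℝ) (hα : 0 < α) (f : ℝ → ℝ)
    (hf : ContDiff ℝ 2 f) (hf0 : f 0 = 1) (hf'0 : deriv f 0 = 0)
    (hfpos : ∀ t ≥ (0 : ℝ), 0 < f t)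
    (hode : ∀ t ≥ (0 : ℝ), deriv (deriv f) t = (α / 2) * (f t) ^ (-α - 1)) :
    Filter.Tendsto (deriv f) Filter.atTop (nhds 1) := by
  have hmono := strictMonoOn_Ici_deriv hα hf hfpos hode
  have hpos {t : ℝ} (ht : 0 < t) : 0 < deriv f t := hf'0 ▸ hmono self_mem_Ici ht.le ht
  have hftop : Tendsto f atTop atTop :=
    tendsto_atTop_of_le_deriv (hpos one_pos) (hf.differentiable two_ne_zero)
      fun x hx => hmono.monotoneOn (mem_Ici.mpr zero_le_one) (mem_Ici.mpr (by linarith)) hx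
  have hsqrt : Tendsto (fun t => √(1 - f t ^ (-α))) atTop (𝓝 1) := by
    simpa using ((tendsto_rpow_neg_atTop hα).comp hftop).const_sub 1 |>.sqrt
  refine hsqrt.congr' ?_
  filter_upwards [eventually_gt_atTop 0] with t ht
  rw [← sq_deriv_add_rpow_neg_eq_one hf hf0 hf'0 hfpos hode ht.le, add_sub_cancel_right,
    Real.sqrt_sq (hpos ht).le]
end

section
/- h is strictly increasing on [0,∞), and its derivative h' is nonincreasing on [0,∞) (i.e. h is concave); in particular 0 < h'(t) ≤ 1 for all t ≥ 0. -/
/-!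
Wherever `f > 0` the ODE makes `f'' = (α/2) f^(-α-1)` positive, so `f'` increases from
`f'(0) = 0`, hence `f` is nondecreasing on `[0,∞)` and `f ≥ f(0) = 1` there. The ODE also gives
`h' = (2/α) f'' = f^(-α-1)`, which is therefore positive, at most `1`, and nonincreasing in `t`.
-/

open Set

theorem monotoneOn_Ici_of_deriv_nonneg {g : ℝ → ℝ} {a : ℝ} (hg : Differentiable ℝ g)
    (hg' : ∀ t ≥ a, 0 ≤ deriv g t) : MonotoneOn g (Ici a) :=
  monotoneOn_of_deriv_nonneg (convex_Ici a) hg.continuous.continuousOn hg.differentiableOn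
    fun t ht => hg' t (interior_subset ht)

theorem monotoneOn_Ici_of_deriv_eq_zero_of_deriv_deriv_nonneg {f : ℝ → ℝ} {a : ℝ}
    (hf : Differentiable ℝ f) (hf' : Differentiable ℝ (deriv f)) (ha : deriv f a = 0)
    (hf'' : ∀ t ≥ a, 0 ≤ deriv (deriv f) t) : MonotoneOn f (Ici a) :=
  monotoneOn_Ici_of_deriv_nonneg hf fun _ ht =>
    ha ▸ monotoneOn_Ici_of_deriv_nonneg hf' hf'' self_mem_Ici ht ht

theorem deriv_const_mul_deriv_eq_rpow {α : ℝ} (hα : α ≠ 0) {f : ℝ → ℝ} {t : ℝ}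
    (hode : deriv (deriv f) t = (α / 2) * f t ^ (-α - 1)) :
    deriv (fun s => (2 / α) * deriv f s) t = f t ^ (-α - 1) := by
  rw [deriv_const_mul_field, hode]
  field_simp

/-- `h` is strictly increasing on `[0,∞)`, its derivative `h'` is nonincreasing on
`[0,∞)` (so `h` is concave there), and `0 < h'(t) ≤ 1` for all `t ≥ 0`. -/
theorem shaYang_h_monotone_concave (α : ℝ) (hα : 0 < α) (f : ℝ → ℝ)
    (hf : ContDiff ℝ 2 f) (hf0 : f 0 = 1) (hf'0 : deriv f 0 = 0)
    (hfpos : ∀ t ≥ (0 : ℝ), 0 < f t)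
    (hode : ∀ t ≥ (0 : ℝ), deriv (deriv f) t = (α / 2) * (f t) ^ (-α - 1))
    (h : ℝ → ℝ) (hh : h = fun t => (2 / α) * deriv f t) :
    StrictMonoOn h (Set.Ici (0 : ℝ)) ∧
      AntitoneOn (deriv h) (Set.Ici (0 : ℝ)) ∧
      ∀ t ≥ (0 : ℝ), 0 < deriv h t ∧ deriv h t ≤ 1 := by
  have hdf : Differentiable ℝ (deriv f) := hf.differentiable_deriv_two
  have hf_mono : MonotoneOn f (Ici 0) :=
    monotoneOn_Ici_of_deriv_eq_zero_of_deriv_deriv_nonneg (hf.differentiable two_ne_zero) hdf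
      hf'0 fun t ht => by rw [hode t ht]; have := hfpos t ht; positivity
  have hh' : ∀ t ≥ (0 : ℝ), deriv h t = f t ^ (-α - 1) := fun t ht =>
    hh ▸ deriv_const_mul_deriv_eq_rpow hα.ne' (hode t ht)
  refine ⟨?_, fun s hs t ht hst => ?_, fun t ht => ?_⟩
  · have hcont : ContinuousOn h (Ici 0) := hh ▸ (continuous_const.mul hdf.continuous).continuousOn
    refine strictMonoOn_of_deriv_pos (convex_Ici 0) hcont fun t ht => ?_
    rw [interior_Ici] at ht
    rw [hh' t ht.le]
    exact Real.rpow_pos_of_pos (hfpos t ht.le) _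
  · rw [hh' s hs, hh' t ht]
    exact Real.rpow_le_rpow_of_nonpos (hfpos s hs) (hf_mono hs ht hst) (by linarith)
  · rw [hh' t ht]
    exact ⟨Real.rpow_pos_of_pos (hfpos t ht) _,
      Real.rpow_le_one_of_one_le_of_nonpos (hf0 ▸ hf_mono self_mem_Ici ht ht) (by linarith)⟩
end

section
/- For all t > 0, −h''(t)/h(t) + (m−2)·(1 − h'(t)²)/h(t)² − n·h'(t)·f'(t)/(h(t)·f(t)) ≥ 0. (This is the nonnegativity of the Ricci curvature of the Sha–Yang doubly warped metric in the directions of the sphere factor S^{m−1}.) -/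
/-!
The ODE `f'' = (α/2) f^(-α-1)` has the first integral `f'² + f^(-α)`, equal to `1` by the
initial conditions. With `C = f^(-α-2)` one has `h' = f^(-α-1) = C f` and `h'' = -(α+1) C f'`,
and substituting these together with `n = α m / 2 + 1` and `f'² = 1 - C f²` collapses the
curvature expression to `(m-2) α² (1 - C) / (4 f'²)`. Since `α > 0`, `f` is convex with
`f'(0) = 0`, so `f' > 0` and `f ≥ 1` on `(0, ∞)`, whence `C ≤ 1`.
-/

open Set

theorem lt_of_deriv_pos_of_pos {g : ℝ → ℝ} (hg : Continuous g)
    (hpos : ∀ x > 0, 0 < deriv g x) {t : ℝ} (ht : 0 < t) : g 0 < g t :=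
  strictMonoOn_of_deriv_pos (convex_Ici 0) hg.continuousOn (by simpa [interior_Ici] using hpos)
    self_mem_Ici ht.le ht

section ShaYangODE

variable {f : ℝ → ℝ} {α : ℝ}

theorem deriv_sq_add_rpow_neg_eq_of_ode (hfd : Differentiable ℝ f)
    (hfd2 : Differentiable ℝ (deriv f)) (hfpos : ∀ t ≥ (0 : ℝ), 0 < f t)
    (hode : ∀ t ≥ (0 : ℝ), deriv (deriv f) t = (α / 2) * (f t) ^ (-α - 1))
    {x : ℝ} (hx : 0 ≤ x) :
    deriv f x ^ 2 + f x ^ (-α) = deriv f 0 ^ 2 + f 0 ^ (-α) := by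
  let E : ℝ → ℝ := fun s => deriv f s ^ 2 + f s ^ (-α)
  have hE_deriv : ∀ y ∈ Ico 0 x, HasDerivWithinAt E 0 (Ici y) y := by
    intro y hy
    have hfy := hfpos y hy.1
    have hE := ((hfd2 y).hasDerivAt.pow 2).add ((hfd y).hasDerivAt.rpow_const (p := -α)
      (Or.inl hfy.ne'))
    refine (hE.congr_deriv ?_).hasDerivWithinAt
    rw [hode y hy.1]
    ring
  have hE_cont : ContinuousOn E (Icc 0 x) :=
    (hfd2.continuous.continuousOn.pow 2).add
      (hfd.continuous.continuousOn.rpow_const fun y hy => Or.inl (hfpos y hy.1).ne')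
  exact constant_of_has_deriv_right_zero hE_cont hE_deriv x ⟨hx, le_rfl⟩

theorem deriv_sq_eq_one_sub_of_ode (hfd : Differentiable ℝ f)
    (hfd2 : Differentiable ℝ (deriv f)) (hfpos : ∀ t ≥ (0 : ℝ), 0 < f t)
    (hode : ∀ t ≥ (0 : ℝ), deriv (deriv f) t = (α / 2) * (f t) ^ (-α - 1))
    (hf0 : f 0 = 1) (hf'0 : deriv f 0 = 0) {t : ℝ} (ht : 0 ≤ t) :
    deriv f t ^ 2 = 1 - f t ^ (-α - 2) * f t ^ 2 := by
  have hE := deriv_sq_add_rpow_neg_eq_of_ode hfd hfd2 hfpos hode ht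
  have hsplit : f t ^ (-α) = f t ^ (-α - 2) * f t ^ 2 := by
    rw [← Real.rpow_natCast, ← Real.rpow_add (hfpos t ht)]
    norm_num
  rw [hf'0, hf0, Real.one_rpow, hsplit] at hE
  linarith

theorem deriv_pos_of_ode (hα : 0 < α) (hfd2 : Differentiable ℝ (deriv f))
    (hfpos : ∀ t ≥ (0 : ℝ), 0 < f t)
    (hode : ∀ t ≥ (0 : ℝ), deriv (deriv f) t = (α / 2) * (f t) ^ (-α - 1))
    (hf'0 : deriv f 0 = 0) {t : ℝ} (ht : 0 < t) : 0 < deriv f t := by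
  have hf'' : ∀ x > 0, 0 < deriv (deriv f) x := fun x hx => by
    rw [hode x hx.le]
    have := hfpos x hx.le
    positivity
  simpa [hf'0] using lt_of_deriv_pos_of_pos hfd2.continuous hf'' ht

theorem deriv_const_mul_deriv_eq_rpow_of_ode (hα : α ≠ 0)
    (hode : ∀ t ≥ (0 : ℝ), deriv (deriv f) t = (α / 2) * (f t) ^ (-α - 1))
    {t : ℝ} (ht : 0 ≤ t) :
    deriv (fun s => 2 / α * deriv f s) t = f t ^ (-α - 1) := by
  rw [deriv_const_mul_field, hode t ht]
  field_simp

theorem deriv_deriv_const_mul_deriv_eq_of_ode (hα : α ≠ 0) (hfd : Differentiable ℝ f)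
    (hfpos : ∀ t ≥ (0 : ℝ), 0 < f t)
    (hode : ∀ t ≥ (0 : ℝ), deriv (deriv f) t = (α / 2) * (f t) ^ (-α - 1))
    {t : ℝ} (ht : 0 < t) :
    deriv (deriv fun s => 2 / α * deriv f s) t = deriv f t * (-α - 1) * f t ^ (-α - 2) := by
  have hnear : deriv (fun s => 2 / α * deriv f s) =ᶠ[nhds t] fun s => f s ^ (-α - 1) := by
    filter_upwards [Ioi_mem_nhds ht] with s hs
    exact deriv_const_mul_deriv_eq_rpow_of_ode hα hode (le_of_lt hs)
  rw [hnear.deriv_eq, ((hfd t).hasDerivAt.rpow_const (Or.inl (hfpos t ht.le).ne')).deriv]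
  ring_nf

end ShaYangODE

theorem sphere_ricci_expr_eq {α m n D F C : ℝ} (hα : α ≠ 0) (hD : D ≠ 0) (hF : F ≠ 0)
    (hn : n = α * m / 2 + 1) (hD2 : D ^ 2 = 1 - C * F ^ 2) :
    -(D * (-α - 1) * C) / (2 / α * D) + (m - 2) * (1 - (C * F) ^ 2) / (2 / α * D) ^ 2
        - n * (C * F * D) / (2 / α * D * F)
      = (m - 2) * α ^ 2 * (1 - C) / (4 * D ^ 2) := by
  subst hn
  field_simp
  linear_combination -4 * α * (m - 2) * C * hD2

/-- Nonnegativity of the Ricci curvature of the Sha–Yang doubly warped metric in the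
directions of the sphere factor `S^{m−1}`: for all `t > 0`,
`−h''(t)/h(t) + (m−2)·(1 − h'(t)²)/h(t)² − n·h'(t)·f'(t)/(h(t)·f(t)) ≥ 0`. -/
theorem shaYang_Ric_sphere_nonneg (n m : ℕ) (hn : 2 ≤ n) (hm : 2 ≤ m)
    (α : ℝ) (hα : α = 2 * ((n : ℝ) - 1) / (m : ℝ))
    (f : ℝ → ℝ) (hf : ContDiff ℝ 3 f)
    (hf0 : f 0 = 1) (hf'0 : deriv f 0 = 0)
    (hfpos : ∀ t ≥ (0 : ℝ), 0 < f t)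
    (hode : ∀ t ≥ (0 : ℝ), deriv (deriv f) t = (α / 2) * (f t) ^ (-α - 1))
    (h : ℝ → ℝ) (hh : h = fun t => (2 / α) * deriv f t) :
    ∀ t > (0 : ℝ),
      0 ≤ -(deriv (deriv h) t) / h t
          + ((m : ℝ) - 2) * (1 - (deriv h t) ^ 2) / (h t) ^ 2
          - (n : ℝ) * (deriv h t * deriv f t) / (h t * f t) := by
  intro t ht
  have hm2 : (2 : ℝ) ≤ m := by exact_mod_cast hm
  have hn2 : (2 : ℝ) ≤ n := by exact_mod_cast hn
  have hαpos : 0 < α := by rw [hα]; apply div_pos <;> linarith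
  have hnα : (n : ℝ) = α * m / 2 + 1 := by rw [hα]; field_simp; ring
  obtain ⟨hfd, -, hf'⟩ := contDiff_succ_iff_deriv.mp (show ContDiff ℝ (2 + 1) f from hf)
  have hfd2 : Differentiable ℝ (deriv f) := hf'.differentiable (by norm_num)
  have hf'pos : ∀ x > 0, 0 < deriv f x := fun x hx =>
    deriv_pos_of_ode hαpos hfd2 hfpos hode hf'0 hx
  have hF : 1 ≤ f t := by simpa [hf0] using (lt_of_deriv_pos_of_pos hfd.continuous hf'pos ht).le
  have hFpos : 0 < f t := by linarith
  have hC : f t ^ (-α - 2) ≤ 1 := Real.rpow_le_one_of_one_le_of_nonpos hF (by linarith)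
  have hB : f t ^ (-α - 1) = f t ^ (-α - 2) * f t := by
    rw [← Real.rpow_add_one hFpos.ne']
    ring_nf
  subst hh
  beta_reduce
  rw [deriv_deriv_const_mul_deriv_eq_of_ode hαpos.ne' hfd hfpos hode ht,
    deriv_const_mul_deriv_eq_rpow_of_ode hαpos.ne' hode ht.le, hB,
    sphere_ricci_expr_eq hαpos.ne' (hf'pos t ht).ne' hFpos.ne' hnα
      (deriv_sq_eq_one_sub_of_ode hfd hfd2 hfpos hode hf0 hf'0 ht.le)]
  have : 0 ≤ 1 - f t ^ (-α - 2) := by linarith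
  have : 0 ≤ (m : ℝ) - 2 := by linarith
  positivity
end

section
/- For all t > 0, −f''(t)/f(t) + (n−1)·(1 − f'(t)²)/f(t)² − (m−1)·h'(t)·f'(t)/(h(t)·f(t)) = 0. (This is the exact vanishing of the lower bound used for the Ricci curvature of the Sha–Yang doubly warped metric in the directions of the factor M, given Ric^g ≥ n−1.) -/
/-!
Multiplying the ODE `f'' = (α/2) f^(-α-1)` by `2 f'` shows that `f'² + f^(-α)` is a first
integral, equal to `1` by the initial data. Hence `1 - f'² = f^(-α)` and `h' = f^(-α-1)`.
Since `f'' > 0` and `f'(0) = 0`, `f' > 0` for `t > 0`, so `f'` cancels in the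
last term and the whole expression becomes `f^(-α-2) · ((n - 1) - m α / 2)`, which vanishes
for `α = 2(n - 1)/m`.
-/

open Set

namespace ShaYang

variable {f : ℝ → ℝ} {α : ℝ}

theorem deriv_sq_add_rpow_eq_of_ode (hf : Differentiable ℝ f)
    (hf' : Differentiable ℝ (deriv f)) (hpos : ∀ t ≥ (0 : ℝ), 0 < f t)
    (hode : ∀ t ≥ (0 : ℝ), deriv (deriv f) t = α / 2 * f t ^ (-α - 1))
    {t : ℝ} (ht : 0 ≤ t) :
    deriv f t ^ 2 + f t ^ (-α) = deriv f 0 ^ 2 + f 0 ^ (-α) := by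
  have hcont : ContinuousOn (fun x => deriv f x ^ 2 + f x ^ (-α)) (Icc 0 t) :=
    (hf'.continuous.pow 2).continuousOn.add <|
      hf.continuous.continuousOn.rpow_const fun x hx => Or.inl (hpos x hx.1).ne'
  refine constant_of_has_deriv_right_zero hcont (fun x hx => ?_) t ⟨ht, le_rfl⟩
  have hx : 0 ≤ x := hx.1
  have hsq : HasDerivAt (fun y => deriv f y ^ 2) (2 * deriv f x * deriv (deriv f) x) x := by
    simpa using (hf' x).hasDerivAt.fun_pow 2
  have hrpow : HasDerivAt (fun y => f y ^ (-α)) (deriv f x * (-α) * f x ^ (-α - 1)) x :=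
    (hf x).hasDerivAt.rpow_const (Or.inl (hpos x hx).ne')
  have hzero : 2 * deriv f x * deriv (deriv f) x + deriv f x * (-α) * f x ^ (-α - 1) = 0 := by
    rw [hode x hx]; ring
  exact (hzero ▸ hsq.add hrpow).hasDerivWithinAt

theorem deriv_pos_of_ode (hf' : Differentiable ℝ (deriv f)) (hα : 0 < α)
    (hpos : ∀ t ≥ (0 : ℝ), 0 < f t)
    (hode : ∀ t ≥ (0 : ℝ), deriv (deriv f) t = α / 2 * f t ^ (-α - 1))
    (hf'0 : deriv f 0 = 0) {t : ℝ} (ht : 0 < t) : 0 < deriv f t := by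
  have hmono : StrictMonoOn (deriv f) (Ici 0) := by
    refine strictMonoOn_of_deriv_pos (convex_Ici 0) hf'.continuous.continuousOn fun x hx => ?_
    rw [interior_Ici] at hx
    have := hpos x hx.le
    rw [hode x hx.le]
    positivity
  simpa [hf'0] using hmono self_mem_Ici ht.le ht

theorem ricci_lower_bound_eq_zero {n m F D : ℝ} (hm : m ≠ 0) (hα : α = 2 * (n - 1) / m)
    (hF : 0 < F) (hD : D ≠ 0) (henergy : D ^ 2 + F ^ (-α) = 1) :
    -(α / 2 * F ^ (-α - 1)) / F + (n - 1) * (1 - D ^ 2) / F ^ 2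
      - (m - 1) * (F ^ (-α - 1) * D) / (2 / α * D * F) = 0 := by
  have hsplit : F ^ (-α) = F ^ (-α - 1) * F := by
    rw [← Real.rpow_add_one hF.ne']; ring_nf
  rw [show 1 - D ^ 2 = F ^ (-α) by linarith, hsplit, hα]
  have hP : 0 < F ^ (-α - 1) := Real.rpow_pos_of_pos hF _
  field_simp
  ring

end ShaYang

open ShaYang in
/-- Exact vanishing of the lower bound for the Ricci curvature of the Sha–Yang doubly
warped metric in the directions of the factor `M`: for all `t > 0`,
`−f''(t)/f(t) + (n−1)·(1 − f'(t)²)/f(t)² − (m−1)·h'(t)·f'(t)/(h(t)·f(t)) = 0`. -/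
theorem shaYang_Ric_M_vanishing (n m : ℕ) (hn : 2 ≤ n) (hm : 2 ≤ m)
    (α : ℝ) (hα : α = 2 * ((n : ℝ) - 1) / (m : ℝ))
    (f : ℝ → ℝ) (hf : ContDiff ℝ 2 f)
    (hf0 : f 0 = 1) (hf'0 : deriv f 0 = 0)
    (hfpos : ∀ t ≥ (0 : ℝ), 0 < f t)
    (hode : ∀ t ≥ (0 : ℝ), deriv (deriv f) t = (α / 2) * (f t) ^ (-α - 1))
    (h : ℝ → ℝ) (hh : h = fun t => (2 / α) * deriv f t) :
    ∀ t > (0 : ℝ),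
      -(deriv (deriv f) t) / f t
          + ((n : ℝ) - 1) * (1 - (deriv f t) ^ 2) / (f t) ^ 2
          - ((m : ℝ) - 1) * (deriv h t * deriv f t) / (h t * f t) = 0 := by
  intro t ht
  have hm0 : (m : ℝ) ≠ 0 := by positivity
  have hα0 : 0 < α := by
    have : (2 : ℝ) ≤ n := by exact_mod_cast hn
    rw [hα]; exact div_pos (by linarith) (by positivity)
  have hfd : Differentiable ℝ f := hf.differentiable (by norm_num)
  have hfd' : Differentiable ℝ (deriv f) := hf.differentiable_deriv_two
  have henergy : deriv f t ^ 2 + f t ^ (-α) = 1 := by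
    simpa [hf0, hf'0] using deriv_sq_add_rpow_eq_of_ode hfd hfd' hfpos hode ht.le
  have hdh : deriv h t = f t ^ (-α - 1) := by
    rw [hh, deriv_const_mul _ (hfd' t), hode t ht.le]; field_simp
  rw [hdh, hh, hode t ht.le]
  exact ricci_lower_bound_eq_zero hm0 hα (hfpos t ht.le)
    (deriv_pos_of_ode hfd' hα0 hfpos hode hf'0 ht).ne' henergy
end

section
/- For every real α > 0 there exists an infinitely differentiable function f : ℝ → ℝ such that f(t) > 0 for all t ∈ ℝ, f(0) = 1, f'(0) = 0, and f''(t) = (α/2)·f(t)^(−α−1) for all t ∈ ℝ. (Global existence of the warping function in the Sha–Yang construction.) -/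
open FormalMultilinearSeries
open scoped NNReal ENNReal ContDiff

/-- A primitive of a function analytic at `x₀` is analytic at `x₀`. -/
lemma analyticAt_of_hasDerivAt_analyticAt {F G : ℝ → ℝ} {x₀ : ℝ}
    (hF : ∀ x : ℝ, HasDerivAt F (G x) x) (hG : AnalyticAt ℝ G x₀) :
    AnalyticAt ℝ F x₀ := by
  obtain ⟨pp, rr, hp⟩ := hG
  obtain ⟨r', hr'0, hr'⟩ : ∃ r' : ℝ≥0, 0 < r' ∧ (r' : ℝ≥0∞) < rr := by
    rcases ENNReal.lt_iff_exists_nnreal_btwn.1 hp.r_pos with ⟨r', h0, hlt⟩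
    exact ⟨r', by exact_mod_cast h0, hlt⟩
  obtain ⟨C, hC0, hC⟩ := pp.norm_mul_pow_le_of_lt_radius (hr'.trans_le hp.r_le)
  set a : ℕ → ℝ := fun n => pp.coeff n with ha_def
  have ha : ∀ n, |a n| * (r' : ℝ) ^ n ≤ C := by
    intro n
    have := hC n
    rwa [pp.norm_apply_eq_norm_coef, Real.norm_eq_abs] at this
  set s : ℝ := (r' : ℝ) / 2 with hs_def
  have hs0 : 0 < s := by positivity
  set t : Set ℝ := Metric.ball x₀ s with ht_def
  set c : ℕ → ℝ := fun n => match n with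
    | 0 => 0
    | (m + 1) => a m / (m + 1) with hc_def
  set h : ℕ → ℝ → ℝ := fun n x => c n * (x - x₀) ^ n with hh_def
  set h' : ℕ → ℝ → ℝ := fun n x => match n with
    | 0 => 0
    | (m + 1) => a m * (x - x₀) ^ m with hh'_def
  have hderiv : ∀ (n : ℕ) (x : ℝ), HasDerivAt (h n) (h' n x) x := by
    intro n x
    cases n with
    | zero => simpa [hh_def, hc_def] using hasDerivAt_const x (0 : ℝ)
    | succ m =>
      have h1 : HasDerivAt (fun x : ℝ => (x - x₀) ^ (m + 1))
          (((m : ℝ) + 1) * (x - x₀) ^ m) x := by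
        have := ((hasDerivAt_id x).sub_const x₀).pow (m + 1)
        simp at this; exact this
      have h2 := h1.const_mul (c (m + 1))
      refine h2.congr_deriv (Eq.symm ?_)
      show a m * (x - x₀) ^ m = c (m + 1) * (((m : ℝ) + 1) * (x - x₀) ^ m)
      have : c (m + 1) = a m / (m + 1) := rfl
      rw [this]
      have hm : ((m : ℝ) + 1) ≠ 0 := by positivity
      rw [← mul_assoc, div_mul_cancel₀ _ hm]
  set u : ℕ → ℝ := fun n => match n with
    | 0 => 0
    | (m + 1) => C * (1 / 2 : ℝ) ^ m with hu_def
  have hu : Summable u := by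
    rw [← summable_nat_add_iff 1]
    have : Summable (fun m : ℕ => C * (1 / 2 : ℝ) ^ m) :=
      (summable_geometric_of_lt_one (by norm_num) (by norm_num)).mul_left C
    exact this.congr (fun m => rfl)
  have hbound : ∀ (n : ℕ) (x : ℝ), x ∈ t → ‖h' n x‖ ≤ u n := by
    intro n x hx
    cases n with
    | zero => simp [hh'_def, hu_def]
    | succ m =>
      show ‖a m * (x - x₀) ^ m‖ ≤ C * (1 / 2 : ℝ) ^ m
      have hxd : |x - x₀| ≤ s := by
        have := Metric.mem_ball.1 hx
        rw [Real.dist_eq] at this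
        exact this.le
      have h1 : ‖a m * (x - x₀) ^ m‖ ≤ |a m| * s ^ m := by
        rw [Real.norm_eq_abs, abs_mul, abs_pow]
        exact mul_le_mul_of_nonneg_left (pow_le_pow_left₀ (abs_nonneg _) hxd m) (abs_nonneg _)
      refine h1.trans ?_
      have hsm : s ^ m = (r' : ℝ) ^ m * (1 / 2 : ℝ) ^ m := by
        rw [hs_def, div_eq_mul_one_div, mul_pow]
      calc |a m| * s ^ m = (|a m| * (r' : ℝ) ^ m) * (1 / 2 : ℝ) ^ m := by
            rw [hsm]; ring
        _ ≤ C * (1 / 2 : ℝ) ^ m :=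
            mul_le_mul_of_nonneg_right (ha m) (by positivity)
  have hmem : x₀ ∈ t := Metric.mem_ball_self hs0
  have hg0 : Summable fun n => h n x₀ := by
    apply summable_of_ne_finset_zero (s := {0})
    intro n hn
    have hn' : n ≠ 0 := by simpa using hn
    obtain ⟨m, rfl⟩ := Nat.exists_eq_succ_of_ne_zero hn'
    simp [hh_def]
  have key : ∀ x ∈ t, HasDerivAt (fun z => ∑' n, h n z) (∑' n, h' n x) x := by
    intro x hx
    exact hasDerivAt_tsum_of_isPreconnected hu Metric.isOpen_ball
      (convex_ball x₀ s).isPreconnected (fun n y _ => hderiv n y) hbound hmem hg0 hx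
  have sumderiv : ∀ x ∈ t, ∑' n, h' n x = G x := by
    intro x hx
    have hmem2 : x - x₀ ∈ Metric.eball (0 : ℝ) rr := by
      rw [mem_eball_zero_iff]
      calc (‖x - x₀‖₊ : ℝ≥0∞) < (r' : ℝ≥0∞) := by
            rw [ENNReal.coe_lt_coe, ← NNReal.coe_lt_coe, coe_nnnorm, Real.norm_eq_abs]
            calc |x - x₀| < s := by
                  have := Metric.mem_ball.1 hx; rwa [Real.dist_eq] at this
              _ ≤ (r' : ℝ) := by rw [hs_def]; linarith [hr'0.le]
        _ < rr := hr'
    have hsum := hp.hasSum hmem2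
    simp only [add_sub_cancel] at hsum
    have hfe : (fun n => pp n fun _ => (x - x₀)) = fun n => a n * (x - x₀) ^ n := by
      funext n
      rw [pp.apply_eq_pow_smul_coeff]
      simp [ha_def, smul_eq_mul, mul_comm]
    rw [hfe] at hsum
    have hshift : HasSum (fun n => h' (n + 1) x) (G x) := hsum
    have hfull := (hasSum_nat_add_iff (f := fun n => h' n x) 1).1 hshift
    simp only [Finset.range_one, Finset.sum_singleton] at hfull
    have h0 : h' 0 x = 0 := rfl
    rw [h0, add_zero] at hfull
    exact hfull.tsum_eq
  set Fl : ℝ → ℝ := fun z => ∑' n, h n z with hFl_def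
  set Fl2 : ℝ → ℝ := fun z => Fl z + (F x₀ - Fl x₀) with hFl2_def
  have keyF : ∀ x ∈ t, HasDerivAt Fl2 (G x) x := by
    intro x hx
    have := (key x hx).add_const (F x₀ - Fl x₀)
    rwa [sumderiv x hx] at this
  have hEq : Set.EqOn F Fl2 t := by
    refine (convex_ball x₀ s).eqOn_of_fderivWithin_eq
      (fun x hx => ((hF x).differentiableAt).differentiableWithinAt)
      (fun x hx => ((keyF x hx).differentiableAt).differentiableWithinAt)
      (Metric.isOpen_ball.uniqueDiffOn) ?_ hmem ?_
    · intro x hx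
      rw [fderivWithin_of_isOpen Metric.isOpen_ball hx,
        fderivWithin_of_isOpen Metric.isOpen_ball hx,
        (hF x).hasFDerivAt.fderiv, (keyF x hx).hasFDerivAt.fderiv]
    · simp [hFl2_def]
  set q := FormalMultilinearSeries.ofScalars ℝ c with hq_def
  have hrad : (r' : ℝ≥0∞) ≤ q.radius := by
    apply q.le_radius_of_bound (C * r')
    intro n
    rw [FormalMultilinearSeries.ofScalars_norm]
    cases n with
    | zero =>
      have : c 0 = 0 := rfl
      rw [this]
      simp only [norm_zero, zero_mul]
      positivity
    | succ m =>
      have hcm : c (m + 1) = a m / (m + 1) := rfl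
      rw [Real.norm_eq_abs, hcm, abs_div, abs_of_nonneg (by positivity : (0:ℝ) ≤ (m:ℝ)+1)]
      have h1 : |a m| / ((m:ℝ) + 1) * (r' : ℝ) ^ (m + 1) ≤ |a m| * (r':ℝ) ^ m * r' := by
        rw [pow_succ]
        have : |a m| / ((m:ℝ) + 1) ≤ |a m| := by
          apply div_le_self (abs_nonneg _) (by linarith [Nat.cast_nonneg (α := ℝ) m])
        calc |a m| / ((m:ℝ) + 1) * ((r':ℝ) ^ m * (r':ℝ))
            ≤ |a m| * ((r':ℝ) ^ m * (r':ℝ)) :=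
              mul_le_mul_of_nonneg_right this (by positivity)
          _ = |a m| * (r':ℝ) ^ m * (r':ℝ) := by ring
      exact h1.trans (mul_le_mul_of_nonneg_right (ha m) r'.coe_nonneg)
  have hq_pos : (0 : ℝ≥0∞) < q.radius :=
    lt_of_lt_of_le (by exact_mod_cast hr'0) hrad
  have hqball : HasFPowerSeriesOnBall Fl q x₀ q.radius := by
    refine ⟨le_rfl, hq_pos, fun {y} hy => ?_⟩
    have hsq := q.hasSum hy
    have heq : Fl (x₀ + y) = q.sum y := by
      rw [FormalMultilinearSeries.sum]
      apply tsum_congr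
      intro n
      rw [FormalMultilinearSeries.ofScalars_apply_eq]
      simp [hh_def, smul_eq_mul]
    rw [heq]
    exact hsq
  have hFlA : AnalyticAt ℝ Fl x₀ := hqball.analyticAt
  have hFl2A : AnalyticAt ℝ Fl2 x₀ := hFlA.add analyticAt_const
  apply hFl2A.congr
  exact Filter.eventuallyEq_of_mem (Metric.isOpen_ball.mem_nhds hmem) (fun x hx => (hEq hx).symm)

/-- Global existence of the warping function in the Sha–Yang construction: for every
real `α > 0` there is a smooth `f : ℝ → ℝ` with `f > 0`, `f(0) = 1`, `f'(0) = 0` and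
`f'' = (α/2)·f^(−α−1)` everywhere. -/
theorem shaYang_global_existence (α : ℝ) (hα : 0 < α) :
    ∃ f : ℝ → ℝ, ContDiff ℝ (⊤ : ℕ∞) f ∧ (∀ t : ℝ, 0 < f t) ∧ f 0 = 1 ∧
      deriv f 0 = 0 ∧
      ∀ t : ℝ, deriv (deriv f) t = (α / 2) * (f t) ^ (-α - 1) := by
  have hα' : α ≠ 0 := hα.ne'
  set P : ℝ := 2 / α with hP_def
  have hP : 0 < P := by positivity
  set gg : ℝ → ℝ := fun s => P * Real.cosh s ^ P with hgg_def
  have hgg_pos : ∀ s, 0 < gg s := fun s =>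
    mul_pos hP (Real.rpow_pos_of_pos (Real.cosh_pos s) P)
  have hgg_cd : ContDiff ℝ ω gg := by
    rw [contDiff_iff_contDiffAt]
    intro s
    exact contDiffAt_const.mul
      ((Real.contDiffAt_rpow_const_of_ne (Real.cosh_pos s).ne').comp s
        Real.contDiff_cosh.contDiffAt)
  have hgg_cont : Continuous gg := hgg_cd.continuous
  set T : ℝ → ℝ := fun x => ∫ s in (0:ℝ)..x, gg s with hT_def
  have hT_deriv : ∀ x, HasDerivAt T (gg x) x := fun x =>
    (hgg_cont.integral_hasStrictDerivAt 0 x).hasDerivAt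
  have hT_cd : ContDiff ℝ ω T := by
    have : AnalyticOnNhd ℝ T Set.univ := fun x _ =>
      analyticAt_of_hasDerivAt_analyticAt hT_deriv hgg_cd.contDiffAt.analyticAt
    exact this.contDiff
  have hT_mono : StrictMono T := by
    apply strictMono_of_deriv_pos
    intro x
    rw [(hT_deriv x).deriv]
    exact hgg_pos x
  have hgg_ge : ∀ s, P ≤ gg s := by
    intro s
    have h1 : (1:ℝ) ≤ Real.cosh s ^ P := by
      calc (1:ℝ) = 1 ^ P := (Real.one_rpow P).symm
        _ ≤ Real.cosh s ^ P :=
            Real.rpow_le_rpow zero_le_one (Real.one_le_cosh s) hP.le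
    calc P = P * 1 := (mul_one P).symm
      _ ≤ P * Real.cosh s ^ P := mul_le_mul_of_nonneg_left h1 hP.le
  have hgg_int : ∀ a b : ℝ, IntervalIntegrable gg MeasureTheory.volume a b :=
    fun a b => hgg_cont.intervalIntegrable a b
  have hT_ge : ∀ x : ℝ, 0 ≤ x → P * x ≤ T x := by
    intro x hx
    have h1 : ∫ s in (0:ℝ)..x, P ≤ ∫ s in (0:ℝ)..x, gg s :=
      intervalIntegral.integral_mono_on hx intervalIntegrable_const (hgg_int 0 x)
        (fun s _ => hgg_ge s)
    rwa [intervalIntegral.integral_const, sub_zero, smul_eq_mul, mul_comm] at h1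
  have hT_le : ∀ x : ℝ, x ≤ 0 → T x ≤ P * x := by
    intro x hx
    have h1 : ∫ s in x..(0:ℝ), P ≤ ∫ s in x..(0:ℝ), gg s :=
      intervalIntegral.integral_mono_on hx intervalIntegrable_const (hgg_int x 0)
        (fun s _ => hgg_ge s)
    rw [intervalIntegral.integral_const, zero_sub, smul_eq_mul] at h1
    have h2 : T x = -∫ s in x..(0:ℝ), gg s := intervalIntegral.integral_symm x 0
    rw [h2]
    linarith
  have h_top : Filter.Tendsto T Filter.atTop Filter.atTop := by
    apply Filter.tendsto_atTop_mono' Filter.atTop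
      (h := Filter.eventually_atTop.2 ⟨0, fun x hx => hT_ge x hx⟩)
    exact Filter.Tendsto.const_mul_atTop hP Filter.tendsto_id
  have h_bot : Filter.Tendsto T Filter.atBot Filter.atBot := by
    apply Filter.tendsto_atBot_mono' Filter.atBot
      (h := Filter.eventually_atBot.2 ⟨0, fun x hx => hT_le x hx⟩)
    exact Filter.Tendsto.const_mul_atBot hP Filter.tendsto_id
  have hT_surj : Function.Surjective T :=
    Continuous.surjective hT_cd.continuous h_top h_bot
  set hom : ℝ ≃ₜ ℝ := (StrictMono.orderIsoOfSurjective T hT_mono hT_surj).toHomeomorph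
    with hhom_def
  have hom_coe : (hom : ℝ → ℝ) = T := rfl
  set u : ℝ → ℝ := ⇑hom.symm with hu_def
  have hu_cd : ContDiff ℝ ω u := by
    apply Homeomorph.contDiff_symm_deriv hom (f' := gg) (fun x => (hgg_pos x).ne')
    · intro x
      rw [hom_coe]
      exact hT_deriv x
    · rw [hom_coe]
      exact hT_cd
  have hTu : ∀ t, T (u t) = t := fun t => hom.apply_symm_apply t
  have huT : ∀ x, u (T x) = x := fun x => hom.symm_apply_apply x
  have hu_diff : Differentiable ℝ u := hu_cd.differentiable (by simp)
  have hu_deriv : ∀ t, HasDerivAt u ((gg (u t))⁻¹) t := by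
    intro t
    have h1 : HasDerivAt (fun x => T (u x)) (gg (u t) * deriv u t) t :=
      (hT_deriv (u t)).comp t (hu_diff t).hasDerivAt
    have h2 : (fun x => T (u x)) = _root_.id := funext hTu
    rw [h2] at h1
    have h3 : gg (u t) * deriv u t = 1 := h1.unique (hasDerivAt_id t)
    have h4 : deriv u t = (gg (u t))⁻¹ := by
      field_simp at h3 ⊢
      rw [eq_div_iff (hgg_pos (u t)).ne']; linarith [h3]
    rw [← h4]
    exact (hu_diff t).hasDerivAt
  have hu0 : u 0 = 0 := by
    have : T 0 = 0 := intervalIntegral.integral_same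
    calc u 0 = u (T 0) := by rw [this]
      _ = 0 := huT 0
  set f : ℝ → ℝ := fun t => Real.cosh (u t) ^ P with hf_def
  have hf'_at : ∀ t, HasDerivAt f (Real.sinh (u t) / Real.cosh (u t)) t := by
    intro t
    have hc : 0 < Real.cosh (u t) := Real.cosh_pos (u t)
    have h1 : HasDerivAt (fun y : ℝ => y ^ P)
        (P * Real.cosh (u t) ^ (P - 1)) (Real.cosh (u t)) :=
      Real.hasDerivAt_rpow_const (Or.inl hc.ne')
    have h2 : HasDerivAt (fun x => Real.cosh (u x))
        (Real.sinh (u t) * (gg (u t))⁻¹) t :=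
      (Real.hasDerivAt_cosh (u t)).comp t (hu_deriv t)
    have h3 := h1.comp t h2
    refine h3.congr_deriv (Eq.symm ?_)
    have hgu : gg (u t) = P * Real.cosh (u t) ^ P := rfl
    rw [hgu, Real.rpow_sub hc, Real.rpow_one]
    have hcP : (0:ℝ) < Real.cosh (u t) ^ P := Real.rpow_pos_of_pos hc P
    field_simp
  have hf' : deriv f = fun t => Real.sinh (u t) / Real.cosh (u t) :=
    funext fun t => (hf'_at t).deriv
  refine ⟨f, ?_, ?_, ?_, ?_, ?_⟩
  · -- smoothness
    rw [contDiff_iff_contDiffAt]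
    intro t
    exact ((Real.contDiffAt_rpow_const_of_ne (Real.cosh_pos (u t)).ne').comp t
      (Real.contDiff_cosh.contDiffAt.comp t hu_cd.contDiffAt)).of_le le_top
  · exact fun t => Real.rpow_pos_of_pos (Real.cosh_pos (u t)) P
  · show Real.cosh (u 0) ^ P = 1
    rw [hu0, Real.cosh_zero, Real.one_rpow]
  · rw [hf']
    show Real.sinh (u 0) / Real.cosh (u 0) = 0
    rw [hu0]
    simp
  · intro t
    have hc : 0 < Real.cosh (u t) := Real.cosh_pos (u t)
    have hcP : (0:ℝ) < Real.cosh (u t) ^ P := Real.rpow_pos_of_pos hc P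
    have hgu : gg (u t) = P * Real.cosh (u t) ^ P := rfl
    have hs' : HasDerivAt (fun x => Real.sinh (u x))
        (Real.cosh (u t) * (gg (u t))⁻¹) t :=
      (Real.hasDerivAt_sinh (u t)).comp t (hu_deriv t)
    have hc' : HasDerivAt (fun x => Real.cosh (u x))
        (Real.sinh (u t) * (gg (u t))⁻¹) t :=
      (Real.hasDerivAt_cosh (u t)).comp t (hu_deriv t)
    have hdiv := hs'.div hc' hc.ne'
    rw [hf']
    rw [HasDerivAt.deriv (f := fun t => Real.sinh (u t) / Real.cosh (u t)) hdiv]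
    have hpy : Real.cosh (u t) ^ 2 - Real.sinh (u t) ^ 2 = 1 :=
      Real.cosh_sq_sub_sinh_sq (u t)
    have hPinv : P⁻¹ = α / 2 := by
      rw [hP_def]
      field_simp
    have hPexp : P * (-α - 1) = -2 + -P := by
      rw [hP_def]
      field_simp
      ring
    have e1 : (f t) ^ (-α - 1) = (Real.cosh (u t) ^ 2)⁻¹ * (Real.cosh (u t) ^ P)⁻¹ := by
      show (Real.cosh (u t) ^ P) ^ (-α - 1) = _
      rw [← Real.rpow_mul hc.le, hPexp, Real.rpow_add hc,
        show ((-2:ℝ)) = -(2:ℝ) from rfl, Real.rpow_neg hc.le, Real.rpow_neg hc.le,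
        Real.rpow_two]
    rw [e1, hgu]
    set c := Real.cosh (u t)
    set s := Real.sinh (u t)
    set X := c ^ P with hX_def
    calc (c * (P * X)⁻¹ * c - s * (s * (P * X)⁻¹)) / c ^ 2
        = (c ^ 2 - s ^ 2) * (P * X)⁻¹ / c ^ 2 := by ring
      _ = (P * X)⁻¹ / c ^ 2 := by rw [hpy, one_mul]
      _ = P⁻¹ * (X⁻¹ * (c ^ 2)⁻¹) := by rw [mul_inv]; ring
      _ = α / 2 * ((c ^ 2)⁻¹ * X⁻¹) := by rw [hPinv]; ring
end
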